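/- For all x > 0, Γ(2x)/Γ(x) ≤ 2^{2x − 1/2} · (x/e)^x. -/

import Mathlib

/-!
`Γ(y + 1/2) / (y/e)^y` does not decrease when `y` grows by `1`: after taking logarithms this
is `∫_y^{y+1} log t dt ≤ log (y + 1/2)`, the tangent-line bound for the concave `log` at the
midpoint. Along `y + n` it tends to `√(2π)`, by Euler's limit formula `Γ(s + n + 1) ~ n^s n!`
and Stirling's formula. Hence `Γ(x + 1/2) ≤ √(2π) (x/e)^x`, which the duplication formula
turns into the bound.
-/

open Real Filter Topology Asymptotics

theorem integral_log_le_mul_log_midpoint {a b : ℝ} (ha : 0 < a) (hab : a ≤ b) :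
    ∫ t in a..b, log t ≤ (b - a) * log ((a + b) / 2) := by
  set m := (a + b) / 2
  have hm : 0 < m := by simp only [m]; linarith
  have tangent : ∀ t ∈ Set.Icc a b, log t ≤ log m + (t / m - 1) := fun t ht => by
    have := log_le_sub_one_of_pos (div_pos (ha.trans_le ht.1) hm)
    rwa [log_div (ha.trans_le ht.1).ne' hm.ne', sub_le_iff_le_add'] at this
  calc ∫ t in a..b, log t ≤ ∫ t in a..b, (log m + (t / m - 1)) :=
        intervalIntegral.integral_mono_on hab intervalIntegral.intervalIntegrable_log'
          (by apply Continuous.intervalIntegrable; fun_prop) tangent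
    _ = (b - a) * log m := by
        rw [intervalIntegral.integral_add (by simp) (by simp)]
        simp only [intervalIntegral.integral_const, smul_eq_mul,
          intervalIntegral.intervalIntegrable_id, IntervalIntegrable.div_const,
          intervalIntegrable_const, intervalIntegral.integral_sub, intervalIntegral.integral_div,
          integral_id, mul_one, add_eq_left]
        field_simp
        simp only [m]
        ring

theorem Gamma_add_nat_eq_mul_prod {s : ℝ} (hs : 0 < s) (n : ℕ) :
    Gamma (s + n) = Gamma s * ∏ j ∈ Finset.range n, (s + j) := by
  induction n with
  | zero => simp
  | succ n ih =>
    rw [Nat.cast_succ, ← add_assoc, Gamma_add_one (by positivity), ih, Finset.prod_range_succ]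
    ring

theorem Gamma_add_nat_add_one_isEquivalent {s : ℝ} (hs : 0 < s) :
    (fun n : ℕ => Gamma (s + n + 1)) ~[atTop] fun n => (n : ℝ) ^ s * n.factorial := by
  refine isEquivalent_of_tendsto_one ?_
  have hΓ : Gamma s ≠ 0 := (Gamma_pos_of_pos hs).ne'
  have := (tendsto_const_nhds (x := Gamma s)).div (GammaSeq_tendsto_Gamma s) hΓ
  rw [div_self hΓ] at this
  refine this.congr fun n => ?_
  simp only [Pi.div_apply, GammaSeq]
  rw [add_assoc, ← Nat.cast_add_one, Gamma_add_nat_eq_mul_prod hs, div_div_eq_mul_div]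

noncomputable def gammaStirlingRatio (y : ℝ) : ℝ :=
  Gamma (y + 1 / 2) / (y / exp 1) ^ y

theorem rpow_div_exp_add_one_le {y : ℝ} (hy : 0 < y) :
    ((y + 1) / exp 1) ^ (y + 1) ≤ (y + 1 / 2) * (y / exp 1) ^ y := by
  have hmid := integral_log_le_mul_log_midpoint hy (le_add_of_nonneg_right zero_le_one)
  rw [integral_log, add_sub_cancel_left, one_mul, show (y + (y + 1)) / 2 = y + 1 / 2 by ring]
    at hmid
  rw [← log_le_log_iff (by positivity) (by positivity), log_mul (by positivity) (by positivity),
    log_rpow (by positivity), log_rpow (by positivity), log_div (by positivity) (exp_ne_zero 1),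
    log_div hy.ne' (exp_ne_zero 1), log_exp]
  linarith

theorem gammaStirlingRatio_le_add_one {y : ℝ} (hy : 0 < y) :
    gammaStirlingRatio y ≤ gammaStirlingRatio (y + 1) := by
  have hΓ : 0 < Gamma (y + 1 / 2) := Gamma_pos_of_pos (by positivity)
  rw [gammaStirlingRatio, gammaStirlingRatio, add_right_comm, Gamma_add_one (by positivity),
    div_le_div_iff₀ (by positivity) (by positivity), mul_assoc, mul_left_comm (y + 1 / 2)]
  exact mul_le_mul_of_nonneg_left (rpow_div_exp_add_one_le hy) hΓ.le

theorem gammaStirlingRatio_le_add_nat {y : ℝ} (hy : 0 < y) (n : ℕ) :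
    gammaStirlingRatio y ≤ gammaStirlingRatio (y + n) := by
  have hmono : Monotone fun n : ℕ => gammaStirlingRatio (y + n) :=
    monotone_nat_of_le_succ fun n => by
      simpa [add_assoc] using gammaStirlingRatio_le_add_one (y := y + n) (by positivity)
  simpa using hmono (Nat.zero_le n)

theorem tendsto_natCast_div_add_rpow (y : ℝ) :
    Tendsto (fun n : ℕ => ((n : ℝ) / (y + n)) ^ (y + n)) atTop (𝓝 (exp (-y))) := by
  refine ((tendsto_one_add_div_rpow_exp (-y)).comp
    (tendsto_atTop_add_const_left _ y tendsto_natCast_atTop_atTop)).congr' ?_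
  filter_upwards [eventually_gt_atTop ⌈-y⌉₊] with n hn
  have : 0 < y + n := by have := Nat.lt_of_ceil_lt hn; linarith
  simp only [Function.comp_apply]
  congr 1
  field_simp
  ring

theorem rpow_mul_stirling_div_rpow_eq {y : ℝ} {n : ℕ} (hn : 0 < n) (hyn : 0 < y + n) :
    (n : ℝ) ^ (y - 1 / 2) * (√(2 * n * π) * (n / exp 1) ^ n) / ((y + n) / exp 1) ^ (y + n)
      = √(2 * π) * exp y * ((n : ℝ) / (y + n)) ^ (y + n) := by
  have hn' : (0 : ℝ) < n := Nat.cast_pos.mpr hn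
  rw [← rpow_natCast, div_rpow hn'.le (exp_pos 1).le, div_rpow hyn.le (exp_pos 1).le,
    div_rpow hn'.le hyn.le, exp_one_rpow, exp_one_rpow, sqrt_eq_rpow, sqrt_eq_rpow,
    mul_rpow (by positivity) (by positivity), mul_rpow (by positivity) hn'.le,
    mul_rpow (by positivity) (by positivity)]
  have hpow : (n : ℝ) ^ (y - 1 / 2) * (n : ℝ) ^ (1 / 2 : ℝ) * (n : ℝ) ^ (n : ℝ)
      = (n : ℝ) ^ (y + n) := by
    rw [← rpow_add hn', ← rpow_add hn']; ring_nf
  rw [exp_add, ← hpow]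
  field_simp

theorem tendsto_gammaStirlingRatio_add_nat {y : ℝ} (hy : 1 / 2 < y) :
    Tendsto (fun n : ℕ => gammaStirlingRatio (y + n)) atTop (𝓝 √(2 * π)) := by
  have hs : 0 < y - 1 / 2 := sub_pos.mpr hy
  have hequiv : (fun n : ℕ => gammaStirlingRatio (y + n)) ~[atTop] fun n : ℕ =>
      (n : ℝ) ^ (y - 1 / 2) * (√(2 * n * π) * (n / exp 1) ^ n)
        / ((y + n) / exp 1) ^ (y + n) := by
    have hnum := (Gamma_add_nat_add_one_isEquivalent hs).trans
      ((IsEquivalent.refl (u := fun n : ℕ => (n : ℝ) ^ (y - 1 / 2))).mul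
        Stirling.factorial_isEquivalent_stirling)
    have hden := IsEquivalent.refl (u := fun n : ℕ => ((y + n) / exp 1) ^ (y + n)) (l := atTop)
    refine (hnum.div hden).congr_left (Eventually.of_forall fun n => ?_)
    simp only [Pi.div_apply, gammaStirlingRatio]
    rw [show y + n + 1 / 2 = y - 1 / 2 + n + 1 by ring]
  have hlim : Tendsto (fun n : ℕ => √(2 * π) * exp y * ((n : ℝ) / (y + n)) ^ (y + n)) atTop
      (𝓝 √(2 * π)) := by
    simpa [mul_assoc, ← exp_add] using
      (tendsto_natCast_div_add_rpow y).const_mul (√(2 * π) * exp y)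
  refine hequiv.symm.tendsto_nhds (hlim.congr' ?_)
  filter_upwards [eventually_gt_atTop 0] with n hn
  exact (rpow_mul_stirling_div_rpow_eq hn (by positivity)).symm

theorem Gamma_add_half_le {x : ℝ} (hx : 0 < x) :
    Gamma (x + 1 / 2) ≤ √(2 * π) * (x / exp 1) ^ x := by
  have hbound : gammaStirlingRatio x ≤ √(2 * π) := by
    refine ge_of_tendsto (tendsto_gammaStirlingRatio_add_nat (y := x + 1) (by linarith))
      (Eventually.of_forall fun n => ?_)
    simpa [add_assoc, add_comm (1 : ℝ)] using gammaStirlingRatio_le_add_nat hx (n + 1)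
  rwa [gammaStirlingRatio, div_le_iff₀ (by positivity)] at hbound

theorem Gamma_two_mul_div_Gamma {x : ℝ} (hx : 0 < x) :
    Gamma (2 * x) / Gamma x = 2 ^ (2 * x - 1 / 2) / √(2 * π) * Gamma (x + 1 / 2) := by
  have hdup := Gamma_mul_Gamma_add_half x
  have hpow : (2 : ℝ) ^ (2 * x - 1 / 2) * 2 ^ (1 - 2 * x) = √2 := by
    rw [← rpow_add two_pos, sqrt_eq_rpow]; ring_nf
  rw [sqrt_mul zero_le_two, div_eq_iff (Gamma_pos_of_pos hx).ne', ← hpow,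
    mul_assoc, mul_comm (Gamma _), hdup]
  field_simp

theorem gamma_ratio_bound (x : ℝ) (hx : 0 < x) :
    Real.Gamma (2 * x) / Real.Gamma x
      ≤ (2 : ℝ) ^ (2 * x - 1/2) * (x / Real.exp 1) ^ x := by
  calc Gamma (2 * x) / Gamma x = 2 ^ (2 * x - 1 / 2) / √(2 * π) * Gamma (x + 1 / 2) :=
        Gamma_two_mul_div_Gamma hx
    _ ≤ 2 ^ (2 * x - 1 / 2) / √(2 * π) * (√(2 * π) * (x / exp 1) ^ x) := by
        gcongr
        exact Gamma_add_half_le hx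
    _ = 2 ^ (2 * x - 1 / 2) * (x / exp 1) ^ x := by
        field_simp
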